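/- For every n and every Boolean function f : (Fin n → Bool) → Bool, there exist a natural number m and a real polynomial g in n + 1 + m variables of total degree at most 2 such that: (1) g is nonnegative on every binary assignment (every point with all coordinates in {0,1} ⊆ ℝ), and (2) for every x : Fin n → Bool and z : Bool, encoded as reals via false ↦ 0, true ↦ 1, one has f(x) = z if and only if there exists a binary assignment a ∈ {0,1}^m of the m auxiliary variables with g(x, z, a) = 0. -/
import Mathlib


/-- Encoding of Booleans as real numbers: `false ↦ 0`, `true ↦ 1`. -/
def boolToReal (b : Bool) : ℝ := if b then 1 else 0

lemma boolToReal_binary (b : Bool) : boolToReal b = 0 ∨ boolToReal b = 1 := by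
  cases b <;> simp [boolToReal]

lemma boolToReal_inj {a b : Bool} (h : boolToReal a = boolToReal b) : a = b := by
  cases a <;> cases b <;> simp_all [boolToReal]

lemma binary_square {p q : ℝ} (hp : p = 0 ∨ p = 1) (hq : q = 0 ∨ q = 1) :
    (1 - 2 * q) * p + q = (p - q) ^ 2 := by
  rcases hp with h | h <;> rcases hq with h' | h' <;> subst h <;> subst h' <;> norm_num

/-- The real-level value of our quadratic penalty function. -/
noncomputable def Gval (n : ℕ) (f : (Fin n → Bool) → Bool) (x : Fin n → ℝ) (z : ℝ)
    (a : (Fin n → Bool) → ℝ) : ℝ :=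
  (∑ y : Fin n → Bool, a y - 1) ^ 2 +
    ∑ y : Fin n → Bool, a y *
      ((∑ i, (x i - boolToReal (y i)) ^ 2) + (z - boolToReal (f y)) ^ 2)

lemma Gval_nonneg {n : ℕ} {f : (Fin n → Bool) → Bool} {x : Fin n → ℝ} {z : ℝ}
    {a : (Fin n → Bool) → ℝ} (ha : ∀ y, 0 ≤ a y) : 0 ≤ Gval n f x z a := by
  refine add_nonneg (sq_nonneg _) (Finset.sum_nonneg fun y _ => ?_)
  exact mul_nonneg (ha y)
    (add_nonneg (Finset.sum_nonneg fun i _ => sq_nonneg _) (sq_nonneg _))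

lemma Gval_iff {n : ℕ} (f : (Fin n → Bool) → Bool) (x : Fin n → Bool) (z : Bool) :
    f x = z ↔ ∃ a : (Fin n → Bool) → ℝ, (∀ y, a y = 0 ∨ a y = 1) ∧
      Gval n f (fun i => boolToReal (x i)) (boolToReal z) a = 0 := by
  constructor
  · intro h
    refine ⟨fun y => if y = x then 1 else 0, fun y => by by_cases hy : y = x <;> simp [hy], ?_⟩
    unfold Gval
    rw [Finset.sum_ite_eq' Finset.univ x (fun _ => (1 : ℝ))]
    simp only [Finset.mem_univ, if_true, sub_self]
    rw [Finset.sum_eq_zero]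
    · ring
    · intro y _
      by_cases hy : y = x
      · subst hy
        simp [h, sub_self]
      · simp [hy]
  · rintro ⟨a, ha, hG⟩
    have ha0 : ∀ y, 0 ≤ a y := fun y => by rcases ha y with h | h <;> simp [h]
    have hterm : ∀ y : Fin n → Bool, 0 ≤ a y *
        ((∑ i, (boolToReal (x i) - boolToReal (y i)) ^ 2) +
          (boolToReal z - boolToReal (f y)) ^ 2) := fun y =>
      mul_nonneg (ha0 y)
        (add_nonneg (Finset.sum_nonneg fun i _ => sq_nonneg _) (sq_nonneg _))
    unfold Gval at hG
    rw [add_eq_zero_iff_of_nonneg (sq_nonneg _) (Finset.sum_nonneg fun y _ => hterm y)] at hG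
    obtain ⟨h1, h2⟩ := hG
    have hsum : ∑ y : Fin n → Bool, a y = 1 := by
      have := pow_eq_zero_iff (n := 2) (by norm_num) |>.mp h1
      linarith [sub_eq_zero.mp this]
    have hx : ∃ y0, a y0 = 1 := by
      by_contra hc
      push_neg at hc
      have : ∀ y : Fin n → Bool, a y = 0 := fun y => by
        rcases ha y with h | h
        · exact h
        · exact absurd h (hc y)
      rw [Finset.sum_eq_zero (fun y _ => this y)] at hsum
      norm_num at hsum
    obtain ⟨y0, hy0⟩ := hx
    have hz := (Finset.sum_eq_zero_iff_of_nonneg (fun y _ => hterm y)).mp h2 y0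
      (Finset.mem_univ _)
    rw [hy0, one_mul] at hz
    have hz' := add_eq_zero_iff_of_nonneg
      (Finset.sum_nonneg fun i _ => sq_nonneg _) (sq_nonneg _) |>.mp hz
    have hxy : x = y0 := by
      funext i
      have := (Finset.sum_eq_zero_iff_of_nonneg (fun i _ => sq_nonneg _)).mp hz'.1 i
        (Finset.mem_univ _)
      have := pow_eq_zero_iff (n := 2) (by norm_num) |>.mp this
      exact boolToReal_inj (sub_eq_zero.mp this)
    have hzf : boolToReal z = boolToReal (f y0) := by
      have := pow_eq_zero_iff (n := 2) (by norm_num) |>.mp hz'.2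
      exact sub_eq_zero.mp this
    rw [hxy]
    exact (boolToReal_inj hzf).symm

/-- Any Boolean function `f : (Fin n → Bool) → Bool` can be represented, using `m`
auxiliary binary variables, by a real polynomial `g` in `n + 1 + m` variables of
total degree at most 2 that is nonnegative on all binary assignments, such that
`f x = z` holds iff some binary assignment of the auxiliary variables makes `g`
vanish on the concatenation of the encoded inputs, the encoded output, and the
auxiliary values. -/
theorem boolean_function_bq_with_ancillas (n : ℕ) (f : (Fin n → Bool) → Bool) :
    ∃ (m : ℕ) (g : MvPolynomial (Fin (n + 1 + m)) ℝ), g.totalDegree ≤ 2 ∧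
      (∀ v : Fin (n + 1 + m) → ℝ, (∀ i, v i = 0 ∨ v i = 1) → 0 ≤ MvPolynomial.eval v g) ∧
      (∀ (x : Fin n → Bool) (z : Bool),
        (f x = z ↔
          ∃ a : Fin m → ℝ, (∀ i, a i = 0 ∨ a i = 1) ∧
            MvPolynomial.eval
              (Fin.append (Fin.append (fun i => boolToReal (x i)) ![boolToReal z]) a) g
              = 0)) := by
  classical
  set m := Fintype.card (Fin n → Bool) with hm
  let e : (Fin n → Bool) ≃ Fin m := Fintype.equivFin _
  -- polynomial variables
  let Xi : Fin n → MvPolynomial (Fin (n + 1 + m)) ℝ := fun i =>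
    MvPolynomial.X (Fin.castAdd m (Fin.castAdd 1 i))
  let Z : MvPolynomial (Fin (n + 1 + m)) ℝ :=
    MvPolynomial.X (Fin.castAdd m (Fin.natAdd n 0))
  let A : (Fin n → Bool) → MvPolynomial (Fin (n + 1 + m)) ℝ := fun y =>
    MvPolynomial.X (Fin.natAdd (n + 1) (e y))
  let L : (Fin n → Bool) → MvPolynomial (Fin (n + 1 + m)) ℝ := fun y =>
    (∑ i, (MvPolynomial.C (1 - 2 * boolToReal (y i)) * Xi i +
      MvPolynomial.C (boolToReal (y i)))) +
    (MvPolynomial.C (1 - 2 * boolToReal (f y)) * Z + MvPolynomial.C (boolToReal (f y)))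
  let S : MvPolynomial (Fin (n + 1 + m)) ℝ := ∑ y : Fin n → Bool, A y
  have heval0 : ∀ v : Fin (n + 1 + m) → ℝ,
      MvPolynomial.eval v ((S - 1) ^ 2 + ∑ y : Fin n → Bool, A y * L y) =
        (∑ y : Fin n → Bool, v (Fin.natAdd (n + 1) (e y)) - 1) ^ 2 +
        ∑ y : Fin n → Bool, v (Fin.natAdd (n + 1) (e y)) *
          ((∑ i, ((1 - 2 * boolToReal (y i)) * v (Fin.castAdd m (Fin.castAdd 1 i)) +
              boolToReal (y i))) +
            ((1 - 2 * boolToReal (f y)) * v (Fin.castAdd m (Fin.natAdd n 0)) +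
              boolToReal (f y))) := by
    intro v
    simp [S, A, L, Xi, Z]
  have heval : ∀ (v : Fin (n + 1 + m) → ℝ), (∀ i, v i = 0 ∨ v i = 1) →
      MvPolynomial.eval v ((S - 1) ^ 2 + ∑ y : Fin n → Bool, A y * L y) =
        Gval n f (fun i => v (Fin.castAdd m (Fin.castAdd 1 i)))
          (v (Fin.castAdd m (Fin.natAdd n 0)))
          (fun y => v (Fin.natAdd (n + 1) (e y))) := by
    intro v hv
    rw [heval0 v]
    unfold Gval
    congr 1
    refine Finset.sum_congr rfl fun y _ => ?_
    congr 1
    rw [Finset.sum_congr rfl fun i _ => binary_square (hv _) (boolToReal_binary _),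
      binary_square (hv _) (boolToReal_binary _)]
  have vbin : ∀ (x : Fin n → Bool) (z : Bool) (a : Fin m → ℝ), (∀ j, a j = 0 ∨ a j = 1) →
      ∀ idx, (Fin.append (Fin.append (fun i => boolToReal (x i)) ![boolToReal z]) a) idx = 0 ∨
        (Fin.append (Fin.append (fun i => boolToReal (x i)) ![boolToReal z]) a) idx = 1 := by
    intro x z a ha idx
    refine Fin.addCases (fun l => ?_) (fun r => ?_) idx
    · rw [Fin.append_left]
      refine Fin.addCases (fun l2 => ?_) (fun r2 => ?_) l
      · rw [Fin.append_left]; exact boolToReal_binary _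
      · rw [Fin.append_right]
        have : r2 = 0 := Subsingleton.elim _ _
        subst this
        simpa using boolToReal_binary z
    · rw [Fin.append_right]; exact ha r
  have vx : ∀ (x : Fin n → Bool) (z : Bool) (a : Fin m → ℝ) (i : Fin n),
      (Fin.append (Fin.append (fun i => boolToReal (x i)) ![boolToReal z]) a)
        (Fin.castAdd m (Fin.castAdd 1 i)) = boolToReal (x i) := by
    intro x z a i
    rw [Fin.append_left, Fin.append_left]
  have vz : ∀ (x : Fin n → Bool) (z : Bool) (a : Fin m → ℝ),
      (Fin.append (Fin.append (fun i => boolToReal (x i)) ![boolToReal z]) a)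
        (Fin.castAdd m (Fin.natAdd n 0)) = boolToReal z := by
    intro x z a
    rw [Fin.append_left, Fin.append_right]
    simp
  have va : ∀ (x : Fin n → Bool) (z : Bool) (a : Fin m → ℝ) (j : Fin m),
      (Fin.append (Fin.append (fun i => boolToReal (x i)) ![boolToReal z]) a)
        (Fin.natAdd (n + 1) j) = a j := by
    intro x z a j
    rw [Fin.append_right]
  refine ⟨m, (S - 1) ^ 2 + ∑ y : Fin n → Bool, A y * L y, ?_, ?_, ?_⟩
  · -- total degree
    have hA : ∀ y, (A y).totalDegree ≤ 1 := fun y =>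
      le_of_eq (MvPolynomial.totalDegree_X _)
    have hS : (S - 1).totalDegree ≤ 1 := by
      refine (MvPolynomial.totalDegree_sub _ _).trans (max_le ?_ ?_)
      · exact (MvPolynomial.totalDegree_finset_sum _ _).trans
          (Finset.sup_le fun y _ => hA y)
      · simp [MvPolynomial.totalDegree_one]
    have hL : ∀ y, (L y).totalDegree ≤ 1 := by
      intro y
      refine (MvPolynomial.totalDegree_add _ _).trans (max_le ?_ ?_)
      · refine (MvPolynomial.totalDegree_finset_sum _ _).trans (Finset.sup_le fun i _ => ?_)
        refine (MvPolynomial.totalDegree_add _ _).trans (max_le ?_ ?_)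
        · refine (MvPolynomial.totalDegree_mul _ _).trans ?_
          rw [MvPolynomial.totalDegree_C, MvPolynomial.totalDegree_X]
        · rw [MvPolynomial.totalDegree_C]; omega
      · refine (MvPolynomial.totalDegree_add _ _).trans (max_le ?_ ?_)
        · refine (MvPolynomial.totalDegree_mul _ _).trans ?_
          rw [MvPolynomial.totalDegree_C, MvPolynomial.totalDegree_X]
        · rw [MvPolynomial.totalDegree_C]; omega
    refine (MvPolynomial.totalDegree_add _ _).trans (max_le ?_ ?_)
    · refine (MvPolynomial.totalDegree_pow _ _).trans ?_
      omega
    · refine (MvPolynomial.totalDegree_finset_sum _ _).trans (Finset.sup_le fun y _ => ?_)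
      refine (MvPolynomial.totalDegree_mul _ _).trans ?_
      have := hA y
      have := hL y
      omega
  · -- nonnegativity
    intro v hv
    rw [heval v hv]
    exact Gval_nonneg fun y => by rcases hv (Fin.natAdd (n + 1) (e y)) with h | h <;> simp [h]
  · -- the characterization
    intro x z
    rw [Gval_iff f x z]
    constructor
    · rintro ⟨a', ha', h'⟩
      refine ⟨a' ∘ e.symm, fun j => ha' _, ?_⟩
      have hbin := vbin x z (a' ∘ e.symm) (fun j => ha' _)
      rw [heval _ hbin]
      simp only [vx, vz, va, Function.comp_apply, Equiv.symm_apply_apply]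
      exact h'
    · rintro ⟨a, ha, h⟩
      refine ⟨fun y => a (e y), fun y => ha _, ?_⟩
      have hbin := vbin x z a ha
      rw [heval _ hbin] at h
      simp only [vx, vz, va] at h
      exact h
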